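/- Let m ≥ 2, let p : Fin n → ℝ be job processing times with p_j ≥ 0, and let ρ' ≥ 1 be real. For k ≥ 1 define OPT(k) as the minimum over job schedules τ : Fin n → Fin k of max_i ∑_{j : τ(j)=i} p_j. Suppose OPT(m) = OPT(m−1), and suppose there is a grouping bag : Fin n → Fin (m−1) into m−1 bags such that for every k with 1 ≤ k ≤ m−1 there exists σ : Fin (m−1) → Fin k with max_i ∑_{j : σ(bag(j))=i} p_j ≤ ρ' · OPT(k). Then there is a grouping bag' : Fin n → Fin m into m bags such that for every k with 1 ≤ k ≤ m there exists σ' : Fin m → Fin k with max_i ∑_{j : σ'(bag'(j))=i} p_j ≤ ρ' · OPT(k). (Any ρ'-robust solution with m−1 bags for machines with speeds in {0,1} remains ρ'-robust with m bags when OPT(m) = OPT(m−1).) -/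
import Mathlib


/-- If OPT(m) = OPT(m−1), then any ρ'-robust grouping into m−1 bags (for speeds in
{0,1}) yields a ρ'-robust grouping into m bags. -/
theorem robust_extension (m n : ℕ) (hm : 2 ≤ m)
    (p : Fin n → ℝ) (hp : ∀ j, 0 ≤ p j) (ρ' : ℝ) (hρ' : 1 ≤ ρ')
    (OPT : ℕ → ℝ)
    (hOPT : ∀ k : ℕ, 1 ≤ k →
      IsLeast {x : ℝ | ∃ τ : Fin n → Fin k,
        x = ⨆ i : Fin k, ∑ j ∈ Finset.univ.filter (fun j => τ j = i), p j} (OPT k))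
    (heq : OPT m = OPT (m - 1))
    (bag : Fin n → Fin (m - 1))
    (hbag : ∀ k : ℕ, 1 ≤ k → k ≤ m - 1 →
      ∃ σ : Fin (m - 1) → Fin k, ∀ i : Fin k,
        ∑ j ∈ Finset.univ.filter (fun j => σ (bag j) = i), p j ≤ ρ' * OPT k) :
    ∃ bag' : Fin n → Fin m, ∀ k : ℕ, 1 ≤ k → k ≤ m →
      ∃ σ' : Fin m → Fin k, ∀ i : Fin k,
        ∑ j ∈ Finset.univ.filter (fun j => σ' (bag' j) = i), p j ≤ ρ' * OPT k := by
  have hm1 : 1 ≤ m - 1 := by omega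
  have hOPTm_nonneg : 0 ≤ OPT m := by
    obtain ⟨⟨τ, hτ⟩, -⟩ := hOPT m (by omega)
    have hne : Nonempty (Fin m) := ⟨⟨0, by omega⟩⟩
    rw [hτ]
    refine le_trans ?_ (le_ciSup (Set.finite_range _).bddAbove hne.some)
    exact Finset.sum_nonneg fun j _ => hp j
  refine ⟨fun j => Fin.castLE (Nat.sub_le m 1) (bag j), fun k hk1 hk => ?_⟩
  by_cases hkm : k ≤ m - 1
  · obtain ⟨σ, hσ⟩ := hbag k hk1 hkm
    refine ⟨fun b => if h : (b : ℕ) < m - 1 then σ ⟨b, h⟩ else σ ⟨0, hm1⟩, fun i => ?_⟩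
    have : ∀ j : Fin n,
        (if h : ((Fin.castLE (Nat.sub_le m 1) (bag j) : Fin m) : ℕ) < m - 1 then
          σ ⟨_, h⟩ else σ ⟨0, hm1⟩) = σ (bag j) := by
      intro j
      rw [dif_pos (by simpa using (bag j).isLt)]
      exact congrArg σ (Fin.ext rfl)
    simpa only [this] using hσ i
  · have hkm' : k = m := by omega
    subst hkm'
    obtain ⟨σ, hσ⟩ := hbag (k - 1) hm1 le_rfl
    refine ⟨fun b => if h : (b : ℕ) < k - 1 then
      Fin.castLE (Nat.sub_le k 1) (σ ⟨b, h⟩) else b, fun i => ?_⟩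
    have key : ∀ j : Fin n,
        (if h : ((Fin.castLE (Nat.sub_le k 1) (bag j) : Fin k) : ℕ) < k - 1 then
          Fin.castLE (Nat.sub_le k 1) (σ ⟨_, h⟩) else (Fin.castLE (Nat.sub_le k 1) (bag j)))
        = Fin.castLE (Nat.sub_le k 1) (σ (bag j)) := by
      intro j
      rw [dif_pos (by simpa using (bag j).isLt)]
      exact congrArg _ (congrArg σ (Fin.ext rfl))
    by_cases hi : (i : ℕ) < k - 1
    · have hiff : ∀ j : Fin n,
          (Fin.castLE (Nat.sub_le k 1) (σ (bag j)) = i) ↔ (σ (bag j) = ⟨i, hi⟩) := by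
        intro j
        constructor
        · intro h; exact Fin.ext (by simpa using congrArg Fin.val h)
        · intro h; exact Fin.ext (by simp [h])
      rw [heq]
      simpa only [key, hiff] using hσ ⟨i, hi⟩
    · have hempty : ∀ j : Fin n,
          ¬ ((if h : ((Fin.castLE (Nat.sub_le k 1) (bag j) : Fin k) : ℕ) < k - 1 then
            Fin.castLE (Nat.sub_le k 1) (σ ⟨_, h⟩) else (Fin.castLE (Nat.sub_le k 1) (bag j)))
            = i) := by
        intro j h
        rw [key j] at h
        have hval := congrArg Fin.val h
        simp at hval
        have := (σ (bag j)).isLt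
        omega
      rw [Finset.filter_false_of_mem (fun j _ => hempty j), Finset.sum_empty]
      exact mul_nonneg (by linarith) hOPTm_nonneg
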